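/- Let m, n, k be positive integers with k ≤ n and let X ∈ M_m ⊗ M_n be Hermitian. Then the following are equivalent: (i) for every N ∈ ℕ and every family A_1,…,A_N ∈ M_{k,n} with ∑_{i=1}^N A_i A_i^* = I_k, the matrix ∑_{i=1}^N (I_m ⊗ A_i) X (I_m ⊗ A_i^*) ∈ M_m ⊗ M_k is positive semidefinite; (ii) X is k-block positive. (This is Theorem 4.3(a): the cone C_m^{min,k} of the k-super minimal operator system on M_n is exactly the cone of k-block positive operators.) -/

import Mathlib

open scoped ComplexOrder Kronecker
open Matrix

noncomputable section

/-- The standard inner product `⟨v, w⟩ = ∑ conj(vᵢ) wᵢ` on `I → ℂ`. -/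
def inprod {I : Type*} [Fintype I] (v w : I → ℂ) : ℂ :=
  ∑ i, (starRingEnd ℂ) (v i) * w i

/-- `v` is a unit vector. -/
def UnitVec {I : Type*} [Fintype I] (v : I → ℂ) : Prop :=
  inprod v v = 1

/-- The Schmidt rank of a vector in `ℂ^I ⊗ ℂ^J`, i.e. the rank of the associated
`I × J` coefficient matrix. -/
noncomputable def SchmidtRank {I J : Type*} [Fintype I] [Fintype J] (v : I × J → ℂ) : ℕ :=
  (Matrix.of fun i j => v (i, j)).rank

/-- The operator norm (largest singular value) of a matrix, as
`sup { |⟨v, A w⟩| : v, w unit vectors }`. -/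
noncomputable def opNorm {I J : Type*} [Fintype I] [Fintype J] (A : Matrix I J ℂ) : ℝ :=
  sSup { t : ℝ | ∃ v w, UnitVec v ∧ UnitVec w ∧ t = ‖inprod v (A.mulVec w)‖ }

/-- The `S(k)`-norm of `X ∈ M_I ⊗ M_J`. -/
noncomputable def SNorm {I J : Type*} [Fintype I] [Fintype J] (k : ℕ)
    (X : Matrix (I × J) (I × J) ℂ) : ℝ :=
  sSup { t : ℝ | ∃ v w : I × J → ℂ, UnitVec v ∧ UnitVec w ∧
    SchmidtRank v ≤ k ∧ SchmidtRank w ≤ k ∧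
    t = ‖inprod v (X.mulVec w)‖ }

/-- `X` is a `k`-block positive (Hermitian) operator: `⟨v, X v⟩ ≥ 0` for every
vector of Schmidt rank at most `k`. -/
def kBlockPos {I J : Type*} [Fintype I] [Fintype J] (k : ℕ)
    (X : Matrix (I × J) (I × J) ℂ) : Prop :=
  X.IsHermitian ∧ ∀ v : I × J → ℂ, SchmidtRank v ≤ k → 0 ≤ inprod v (X.mulVec v)

/-- `ρ` has Schmidt number at most `k` (in particular it is positive semidefinite):
it is a finite nonnegative combination of rank-one projections onto vectors of
Schmidt rank at most `k`. -/
def SchmidtNumberLE {I J : Type*} [Fintype I] [Fintype J] (k : ℕ)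
    (ρ : Matrix (I × J) (I × J) ℂ) : Prop :=
  ∃ (N : ℕ) (c : Fin N → ℝ) (v : Fin N → (I × J → ℂ)),
    (∀ i, 0 ≤ c i) ∧ (∀ i, SchmidtRank (v i) ≤ k) ∧
    ρ = ∑ i, (c i : ℂ) • Matrix.vecMulVec (v i) (star (v i))

/-- `id_I ⊗ Φ` : the map applying `Φ` to the second tensor factor. -/
noncomputable def tensorId {I : Type*} [Fintype I] {a b : ℕ}
    (Φ : Matrix (Fin a) (Fin a) ℂ →ₗ[ℂ] Matrix (Fin b) (Fin b) ℂ)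
    (X : Matrix (I × Fin a) (I × Fin a) ℂ) : Matrix (I × Fin b) (I × Fin b) ℂ :=
  Matrix.of fun p q => Φ (Matrix.of fun s t => X (p.1, s) (q.1, t)) p.2 q.2

/-- The trace norm `‖X‖_tr = Tr √(X^* X)`. -/
noncomputable def trNorm {I : Type*} [Fintype I] [DecidableEq I] (X : Matrix I I ℂ) : ℝ :=
  (((Matrix.posSemidef_conjTranspose_mul_self X).1.eigenvectorUnitary : Matrix I I ℂ) *
    Matrix.diagonal (((↑) : ℝ → ℂ) ∘ Real.sqrt ∘ (Matrix.posSemidef_conjTranspose_mul_self X).1.eigenvalues) *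
    (star (Matrix.posSemidef_conjTranspose_mul_self X).1.eigenvectorUnitary : Matrix I I ℂ)).trace.re

end

/-!
A vector `v` of Schmidt rank at most `k` is exactly one of the form `(1 ⊗ A)ᴴ u` with
`A ∈ M_{k,n}` a coisometry (`A Aᴴ = 1`): its coefficient matrix `Y` has rank at most `k`, so it
factors as `Y = Q Z` through an isometry `Q = Aᴴ`, whose columns are `k` eigenvectors of `Y Yᴴ`
covering all its nonzero eigenvalues. Since
`⟨u, (1 ⊗ A) X (1 ⊗ A)ᴴ u⟩ = ⟨(1 ⊗ A)ᴴ u, X (1 ⊗ A)ᴴ u⟩`, `k`-block positivity makes every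
summand in (i) positive semidefinite, and conversely (i) with the single coisometry `A` (`N = 1`)
gives `⟨v, X v⟩ ≥ 0`.
-/

theorem Function.Embedding.exists_range_superset {α β : Type*} [Fintype α] [Fintype β]
    (s : Finset β) (hs : s.card ≤ Fintype.card α) (hα : Fintype.card α ≤ Fintype.card β) :
    ∃ f : α ↪ β, ↑s ⊆ Set.range f := by
  obtain ⟨t, hst, ht⟩ := Finset.exists_superset_card_eq hs (by simpa using hα)
  obtain ⟨f, hf⟩ := Function.Embedding.exists_of_card_eq_finset ht.symm
  exact ⟨f, fun x hx => by simpa [← hf] using hst hx⟩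

namespace Matrix

theorem star_dotProduct_mul_mul_conjTranspose_mulVec {m n R : Type*} [Fintype m]
    [Fintype n] [CommSemiring R] [StarRing R] (M : Matrix m n R) (X : Matrix n n R)
    (u : m → R) :
    star u ⬝ᵥ (M * X * Mᴴ) *ᵥ u = star (Mᴴ *ᵥ u) ⬝ᵥ X *ᵥ (Mᴴ *ᵥ u) := by
  rw [star_mulVec, conjTranspose_conjTranspose, ← mulVec_mulVec, ← mulVec_mulVec,
    dotProduct_mulVec (star u) M, dotProduct_mulVec, dotProduct_mulVec]

theorem submatrix_id_mul_submatrix_id {α β ν κ R : Type*} [Fintype ν] [Fintype κ]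
    [DecidableEq ν] [Semiring R] (M : Matrix α ν R) (N : Matrix ν β R) (g : κ ↪ ν) :
    M.submatrix id g * N.submatrix g id =
      M * (diagonal ((Set.range g).indicator 1) : Matrix ν ν R) * N := by
  classical
  ext x y
  rw [mul_apply, mul_apply]
  simp only [submatrix_apply, id, mul_diagonal, Set.indicator_apply, Pi.one_apply, mul_ite,
    mul_one, mul_zero, ite_mul, zero_mul]
  rw [← Finset.sum_filter, ← Finset.sum_map Finset.univ g (fun z => M x z * N z y)]
  congr 1
  ext z
  simp

theorem exists_isometry_mul_eq_of_rank_le {𝕜 ι ν κ : Type*} [RCLike 𝕜] [Fintype ι]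
    [Fintype ν] [Fintype κ] [DecidableEq ν] [DecidableEq κ] (Y : Matrix ν ι 𝕜)
    (hY : Y.rank ≤ Fintype.card κ) (hκ : Fintype.card κ ≤ Fintype.card ν) :
    ∃ (Q : Matrix ν κ 𝕜) (Z : Matrix κ ι 𝕜), Qᴴ * Q = 1 ∧ Q * Z = Y := by
  have hP : (Y * Yᴴ).IsHermitian := isHermitian_mul_conjTranspose_self Y
  set d := hP.eigenvalues
  obtain ⟨g, hg⟩ := Function.Embedding.exists_range_superset (Finset.univ.filter (d · ≠ 0))
    (by rwa [← Fintype.card_subtype, ← hP.rank_eq_card_non_zero_eigs,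
      rank_self_mul_conjTranspose]) hκ
  set U : Matrix ν ν 𝕜 := (hP.eigenvectorUnitary : Matrix ν ν 𝕜)
  set D : Matrix ν ν 𝕜 := diagonal (RCLike.ofReal ∘ d)
  set E : Matrix ν ν 𝕜 := diagonal ((Set.range g).indicator 1)
  have hUU : Uᴴ * U = 1 := Unitary.coe_star_mul_self hP.eigenvectorUnitary
  have hP_eq : Y * Yᴴ = U * D * Uᴴ := by
    simpa [star_eq_conjTranspose] using hP.spectral_theorem
  set Q := U.submatrix id g
  refine ⟨Q, Qᴴ * Y, ?_, ?_⟩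
  · calc Qᴴ * Q = (Uᴴ * U).submatrix g g := by
          rw [conjTranspose_submatrix]; exact (submatrix_mul_equiv _ _ _ (.refl ν) _).symm
      _ = 1 := by rw [hUU, submatrix_one_embedding]
  -- `Q Qᴴ = U E Uᴴ` is the spectral projection onto `range g`, which contains the support
  -- of `d`, so it fixes `Y Yᴴ` and hence `Y`.
  have hproj : Q * Qᴴ = U * E * Uᴴ := by
    rw [conjTranspose_submatrix]
    exact submatrix_id_mul_submatrix_id U Uᴴ g
  have hED : E * D = D := by
    rw [diagonal_mul_diagonal]
    congr 1
    funext z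
    by_cases hz : z ∈ Set.range g
    · simp [hz]
    · have : d z = 0 := by_contra fun h => hz (hg (by simpa using h))
      simp [this]
  have hfix : Q * Qᴴ * (Y * Yᴴ) = Y * Yᴴ := by
    rw [hproj, hP_eq]
    calc U * E * Uᴴ * (U * D * Uᴴ) = U * (E * (Uᴴ * U) * D) * Uᴴ := by
          simp only [Matrix.mul_assoc]
      _ = U * D * Uᴴ := by rw [hUU, Matrix.mul_one, hED]
  have hker : (Q * Qᴴ - 1) * Y = 0 :=
    (mul_self_mul_conjTranspose_eq_zero Y _).1
      (by rw [Matrix.sub_mul, hfix, Matrix.one_mul, sub_self])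
  rwa [Matrix.sub_mul, Matrix.one_mul, sub_eq_zero, Matrix.mul_assoc] at hker

end Matrix

section SchmidtRank

variable {ι ν κ : Type*} [Fintype ι] [Fintype ν] [Fintype κ]

theorem schmidtRank_vec (Y : Matrix ν ι ℂ) : SchmidtRank (vec Y) = Y.rank := by
  rw [SchmidtRank, ← rank_transpose]
  rfl

theorem schmidtRank_one_kronecker_conjTranspose_mulVec_le [DecidableEq ι] (A : Matrix κ ν ℂ)
    (u : ι × κ → ℂ) :
    SchmidtRank (((1 : Matrix ι ι ℂ) ⊗ₖ A)ᴴ *ᵥ u) ≤ Fintype.card κ := by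
  rw [show u = vec (of fun s i => u (i, s)) from rfl, conjTranspose_kronecker, conjTranspose_one,
    kronecker_mulVec_vec, schmidtRank_vec]
  exact (rank_mul_le_left _ _).trans ((rank_mul_le_left _ _).trans (rank_le_card_width _))

theorem exists_one_kronecker_conjTranspose_mulVec_eq [DecidableEq ι] [DecidableEq ν]
    [DecidableEq κ] (hκ : Fintype.card κ ≤ Fintype.card ν) (v : ι × ν → ℂ)
    (hv : SchmidtRank v ≤ Fintype.card κ) :
    ∃ A : Matrix κ ν ℂ, A * Aᴴ = 1 ∧
      ∃ u, ((1 : Matrix ι ι ℂ) ⊗ₖ A)ᴴ *ᵥ u = v := by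
  obtain ⟨Q, Z, hQ, hQZ⟩ :=
    exists_isometry_mul_eq_of_rank_le (of fun j i => v (i, j)) (by rwa [← schmidtRank_vec]) hκ
  refine ⟨Qᴴ, by rwa [conjTranspose_conjTranspose], vec Z, ?_⟩
  rw [conjTranspose_kronecker, conjTranspose_one, conjTranspose_conjTranspose,
    kronecker_mulVec_vec, transpose_one, Matrix.mul_one, hQZ]
  rfl

end SchmidtRank

theorem kBlockPos.posSemidef_one_kronecker_mul_mul_conjTranspose {ι ν κ : Type*} [Fintype ι]
    [Fintype ν] [Fintype κ] [DecidableEq ι] {k : ℕ} {X : Matrix (ι × ν) (ι × ν) ℂ}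
    (hX : kBlockPos k X) (A : Matrix κ ν ℂ) (hκ : Fintype.card κ ≤ k) :
    (((1 : Matrix ι ι ℂ) ⊗ₖ A) * X * ((1 : Matrix ι ι ℂ) ⊗ₖ A)ᴴ).PosSemidef := by
  refine .of_dotProduct_mulVec_nonneg (isHermitian_mul_mul_conjTranspose _ hX.1) fun u => ?_
  rw [star_dotProduct_mul_mul_conjTranspose_mulVec]
  exact hX.2 _ ((schmidtRank_one_kronecker_conjTranspose_mulVec_le A u).trans hκ)

theorem mem_kSuperMinimal_cone_iff_kBlockPos_general (m n k : ℕ) (hkn : k ≤ n)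
    (X : Matrix (Fin m × Fin n) (Fin m × Fin n) ℂ) (hX : X.IsHermitian) :
    (∀ (N : ℕ) (A : Fin N → Matrix (Fin k) (Fin n) ℂ),
        (∑ i, A i * (A i)ᴴ) = 1 →
        (∑ i, ((1 : Matrix (Fin m) (Fin m) ℂ) ⊗ₖ A i) * X *
          (((1 : Matrix (Fin m) (Fin m) ℂ) ⊗ₖ A i)ᴴ)).PosSemidef)
      ↔ kBlockPos k X := by
  refine ⟨fun hcone => ⟨hX, fun v hv => ?_⟩, fun hblock N A _ => posSemidef_sum _ fun i _ =>
    hblock.posSemidef_one_kronecker_mul_mul_conjTranspose (A i) (Fintype.card_fin k).le⟩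
  obtain ⟨A, hA, u, rfl⟩ := exists_one_kronecker_conjTranspose_mulVec_eq (κ := Fin k)
    (by simpa using hkn) v (by simpa using hv)
  have := (hcone 1 (fun _ => A) (by simpa using hA)).dotProduct_mulVec_nonneg u
  rw [Fin.sum_univ_one, star_dotProduct_mul_mul_conjTranspose_mulVec] at this
  exact this

/-- Theorem 4.3(a): the cone `C_m^{min,k}` is exactly the cone of `k`-block positive operators. -/
theorem mem_kSuperMinimal_cone_iff_kBlockPos (m n k : ℕ) (hm : 0 < m) (hn : 0 < n)
    (hk : 0 < k) (hkn : k ≤ n)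
    (X : Matrix (Fin m × Fin n) (Fin m × Fin n) ℂ) (hX : X.IsHermitian) :
    (∀ (N : ℕ) (A : Fin N → Matrix (Fin k) (Fin n) ℂ),
        (∑ i, A i * (A i)ᴴ) = 1 →
        (∑ i, ((1 : Matrix (Fin m) (Fin m) ℂ) ⊗ₖ A i) * X *
          (((1 : Matrix (Fin m) (Fin m) ℂ) ⊗ₖ A i)ᴴ)).PosSemidef)
      ↔ kBlockPos k X :=
  mem_kSuperMinimal_cone_iff_kBlockPos_general m n k hkn X hX
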